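/- A module over any ring is finitely generated and projective if and only if it is finitely presented and flat. -/

import Mathlib

/-!
A finitely generated projective module is a direct summand of some `(Vᵐᵒᵖ)ⁿ`, and
`(Vᵐᵒᵖ)ⁿ ⊗_V N ≅ Nⁿ` naturally in `N`, so it is flat. Conversely (Villamayor), write a finitely
presented flat `M` as `F / K` with `F` free of finite rank and `K` finitely generated. For
`k ∈ K`, flatness against the left ideal `I` generated by the coordinates `k_j` of `k` gives
`K ∩ F I = K I`, hence `k = Σ_j y_j k_j` with all `y_j ∈ K`; then `θ : e_j ↦ y_j` maps `F` into
`K` and fixes `k`. Composing the maps `1 - θ` for the finitely many generators of `K` gives an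
endomorphism of `F` over `M` that kills `K`, i.e. a section of `F → M`.
-/

open scoped TensorProduct
open MulOpposite

/-- The balancing relations defining the tensor product `M ⊗_V N` of a right `V`-module `M`
and a left `V`-module `N` over a (possibly noncommutative) ring `V`, as a quotient of the
tensor product of abelian groups `M ⊗[ℤ] N`. -/
def tensorRel (V : Type) [Ring V] (M N : Type) [AddCommGroup M] [Module Vᵐᵒᵖ M]
    [AddCommGroup N] [Module V N] : Submodule ℤ (M ⊗[ℤ] N) :=
  Submodule.span ℤ
    {z | ∃ (m : M) (a : V) (n : N), z = (op a • m) ⊗ₜ[ℤ] n - m ⊗ₜ[ℤ] (a • n)}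

/-- The tensor product `M ⊗_V N` of a right `V`-module and a left `V`-module. -/
abbrev NCTensor (V : Type) [Ring V] (M N : Type) [AddCommGroup M] [Module Vᵐᵒᵖ M]
    [AddCommGroup N] [Module V N] : Type :=
  (M ⊗[ℤ] N) ⧸ tensorRel V M N

/-- The map `M ⊗_V N → M ⊗_V N'` induced by a map `f : N → N'` of left `V`-modules. -/
noncomputable def NCTensor.map (V : Type) [Ring V] (M : Type) [AddCommGroup M]
    [Module Vᵐᵒᵖ M] {N N' : Type} [AddCommGroup N] [Module V N] [AddCommGroup N']
    [Module V N'] (f : N →ₗ[V] N') : NCTensor V M N →ₗ[ℤ] NCTensor V M N' :=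
  Submodule.mapQ _ _
    (TensorProduct.map LinearMap.id f.toAddMonoidHom.toIntLinearMap)
    (by
      rw [tensorRel, Submodule.span_le]
      rintro z ⟨m, a, n, rfl⟩
      simp only [SetLike.mem_coe, Submodule.mem_comap, map_sub, TensorProduct.map_tmul,
        LinearMap.id_coe, id_eq, AddMonoidHom.coe_toIntLinearMap, LinearMap.toAddMonoidHom_coe]
      exact Submodule.subset_span ⟨m, a, f n, by
        erw [map_sub, TensorProduct.map_tmul, TensorProduct.map_tmul]
        simp [map_smul]⟩)

/-- A right `V`-module `M` is flat if tensoring with `M` preserves injectivity of maps of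
left `V`-modules (equivalently, the functor `M ⊗_V (-)` is exact). -/
def RightFlat (V : Type) [Ring V] (M : Type) [AddCommGroup M] [Module Vᵐᵒᵖ M] : Prop :=
  ∀ (N N' : Type) [AddCommGroup N] [Module V N] [AddCommGroup N'] [Module V N']
    (f : N →ₗ[V] N'), Function.Injective f → Function.Injective (NCTensor.map V M f)

namespace NCTensor

variable {V : Type} [Ring V] {M M' M'' : Type} [AddCommGroup M] [Module Vᵐᵒᵖ M]
  [AddCommGroup M'] [Module Vᵐᵒᵖ M'] [AddCommGroup M''] [Module Vᵐᵒᵖ M'']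
  {N N' : Type} [AddCommGroup N] [Module V N] [AddCommGroup N'] [Module V N']

variable (V M N) in
noncomputable def mk : M ⊗[ℤ] N →ₗ[ℤ] NCTensor V M N := (tensorRel V M N).mkQ

lemma mk_surjective : Function.Surjective (mk V M N) := Submodule.mkQ_surjective _

lemma mk_eq_zero_iff {w : M ⊗[ℤ] N} : mk V M N w = 0 ↔ w ∈ tensorRel V M N :=
  Submodule.Quotient.mk_eq_zero _

lemma mk_smul_tmul (m : M) (a : V) (n : N) :
    mk V M N ((op a • m) ⊗ₜ n) = mk V M N (m ⊗ₜ (a • n)) := by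
  rw [mk, Submodule.mkQ_apply, Submodule.mkQ_apply, Submodule.Quotient.eq]
  exact Submodule.subset_span ⟨m, a, n, rfl⟩

lemma ext {P : Type} [AddCommGroup P] {f g : NCTensor V M N →ₗ[ℤ] P}
    (h : ∀ (m : M) (n : N), f (mk V M N (m ⊗ₜ n)) = g (mk V M N (m ⊗ₜ n))) : f = g :=
  Submodule.linearMap_qext _ (TensorProduct.ext' h)

@[simp]
lemma map_mk (f : N →ₗ[V] N') (m : M) (n : N) :
    NCTensor.map V M f (mk V M N (m ⊗ₜ n)) = mk V M N' (m ⊗ₜ f n) :=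
  rfl

lemma tensorRel_le_comap_rTensor (g : M →ₗ[Vᵐᵒᵖ] M') :
    tensorRel V M N ≤ (tensorRel V M' N).comap (g.toAddMonoidHom.toIntLinearMap.rTensor N) := by
  refine Submodule.span_le.mpr ?_
  rintro _ ⟨m, a, n, rfl⟩
  exact Submodule.subset_span ⟨g m, a, n, by simp⟩

variable (N) in
noncomputable def mapLeft (g : M →ₗ[Vᵐᵒᵖ] M') : NCTensor V M N →ₗ[ℤ] NCTensor V M' N :=
  Submodule.mapQ _ _ (g.toAddMonoidHom.toIntLinearMap.rTensor N) (tensorRel_le_comap_rTensor g)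

lemma mapLeft_mk (g : M →ₗ[Vᵐᵒᵖ] M') (w : M ⊗[ℤ] N) :
    mapLeft N g (mk V M N w) = mk V M' N (g.toAddMonoidHom.toIntLinearMap.rTensor N w) :=
  rfl

@[simp]
lemma mapLeft_mk_tmul (g : M →ₗ[Vᵐᵒᵖ] M') (m : M) (n : N) :
    mapLeft N g (mk V M N (m ⊗ₜ n)) = mk V M' N (g m ⊗ₜ n) :=
  rfl

lemma mapLeft_comp (g' : M' →ₗ[Vᵐᵒᵖ] M'') (g : M →ₗ[Vᵐᵒᵖ] M') :
    mapLeft N (g' ∘ₗ g) = mapLeft N g' ∘ₗ mapLeft N g :=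
  ext fun _ _ => rfl

lemma mapLeft_id : mapLeft N (LinearMap.id : M →ₗ[Vᵐᵒᵖ] M) = LinearMap.id :=
  ext fun _ _ => rfl

lemma map_comp_mapLeft (g : M →ₗ[Vᵐᵒᵖ] M') (f : N →ₗ[V] N') :
    NCTensor.map V M' f ∘ₗ mapLeft N g = mapLeft N' g ∘ₗ NCTensor.map V M f :=
  ext fun _ _ => rfl

lemma tensorRel_eq_map_of_surjective {g : M →ₗ[Vᵐᵒᵖ] M'} (hg : Function.Surjective g) :
    tensorRel V M' N = (tensorRel V M N).map (g.toAddMonoidHom.toIntLinearMap.rTensor N) := by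
  refine le_antisymm ?_ (Submodule.map_le_iff_le_comap.mpr (tensorRel_le_comap_rTensor g))
  refine Submodule.span_le.mpr ?_
  rintro _ ⟨m, a, n, rfl⟩
  obtain ⟨x, rfl⟩ := hg m
  exact ⟨_, Submodule.subset_span ⟨x, a, n, rfl⟩, by simp⟩

lemma ker_mapLeft_le_range_of_surjective {g : M →ₗ[Vᵐᵒᵖ] M'} (hg : Function.Surjective g) :
    LinearMap.ker (mapLeft N g) ≤ LinearMap.range (mapLeft N (LinearMap.ker g).subtype) := by
  intro z hz
  obtain ⟨w, rfl⟩ := mk_surjective z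
  rw [LinearMap.mem_ker, mapLeft_mk, mk_eq_zero_iff, tensorRel_eq_map_of_surjective hg] at hz
  obtain ⟨v, hv, hgv⟩ := hz
  have hexact : Function.Exact (LinearMap.ker g).subtype.toAddMonoidHom.toIntLinearMap
      g.toAddMonoidHom.toIntLinearMap :=
    LinearMap.exact_subtype_ker_map g
  obtain ⟨u, hu⟩ := (rTensor_exact N hexact hg (w - v)).mp (by rw [map_sub, hgv, sub_self])
  refine ⟨mk V _ N u, ?_⟩
  rw [mapLeft_mk, hu, map_sub, mk_eq_zero_iff.mpr hv, sub_zero]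

section Pi

variable (V) in
noncomputable def piScalarLeft (ι N : Type) [Fintype ι] [AddCommGroup N] [Module V N] :
    NCTensor V (ι → Vᵐᵒᵖ) N →ₗ[ℤ] (ι → N) :=
  (tensorRel V (ι → Vᵐᵒᵖ) N).liftQ
    (TensorProduct.lift <| LinearMap.mk₂ ℤ (fun x c j => (x j).unop • c)
      (fun x y c => by ext; simp [add_smul])
      (fun z x c => by ext; simp only [Pi.smul_apply, unop_smul, smul_assoc])
      (fun x c d => by ext; simp)
      (fun z x c => by ext; exact smul_comm _ _ _))
    (Submodule.span_le.mpr <| by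
      rintro _ ⟨x, a, c, rfl⟩
      refine LinearMap.sub_mem_ker_iff.mpr ?_
      ext j
      show unop ((op a • x) j) • c = unop (x j) • a • c
      simp [mul_smul])

variable {ι : Type} [Fintype ι]

@[simp]
lemma piScalarLeft_mk_tmul (x : ι → Vᵐᵒᵖ) (c : N) :
    piScalarLeft V ι N (mk V _ N (x ⊗ₜ c)) = fun j => (x j).unop • c :=
  rfl

variable [DecidableEq ι]

lemma piScalarLeft_sum_single (v : ι → N) :
    piScalarLeft V ι N (∑ j, mk V _ N (Pi.single j 1 ⊗ₜ v j)) = v := by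
  ext i
  simp [Pi.single_apply, apply_ite unop, ite_smul]

lemma sum_single_piScalarLeft (z : NCTensor V (ι → Vᵐᵒᵖ) N) :
    ∑ j, mk V _ N (Pi.single j 1 ⊗ₜ piScalarLeft V ι N z j) = z := by
  obtain ⟨w, rfl⟩ := mk_surjective z
  induction w using TensorProduct.induction_on with
  | zero => simp
  | add x y hx hy =>
    simp only [map_add, Pi.add_apply, TensorProduct.tmul_add, Finset.sum_add_distrib, hx, hy]
  | tmul x c =>
    have hsingle : ∀ j, op (x j).unop • (Pi.single j 1 : ι → Vᵐᵒᵖ) = Pi.single j (x j) := by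
      intro j
      rw [← Pi.single_smul', smul_eq_mul, op_unop, mul_one]
    simp only [piScalarLeft_mk_tmul, ← mk_smul_tmul, hsingle]
    rw [← map_sum, ← TensorProduct.sum_tmul, Finset.univ_sum_single]

lemma piScalarLeft_bijective : Function.Bijective (piScalarLeft V ι N) :=
  ⟨fun z z' h => by rw [← sum_single_piScalarLeft z, ← sum_single_piScalarLeft z', h],
    fun v => ⟨_, piScalarLeft_sum_single v⟩⟩

omit [DecidableEq ι] in
lemma piScalarLeft_map (f : N →ₗ[V] N') (z : NCTensor V (ι → Vᵐᵒᵖ) N) :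
    piScalarLeft V ι N' (NCTensor.map V _ f z) = f ∘ piScalarLeft V ι N z := by
  have : piScalarLeft V ι N' ∘ₗ NCTensor.map V _ f =
      f.toAddMonoidHom.toIntLinearMap.compLeft ι ∘ₗ piScalarLeft V ι N :=
    ext fun x c => by ext; simp
  exact DFunLike.congr_fun this z

end Pi

end NCTensor

open NCTensor

namespace RightFlat

variable {V : Type} [Ring V] {M M' : Type} [AddCommGroup M] [Module Vᵐᵒᵖ M]
  [AddCommGroup M'] [Module Vᵐᵒᵖ M']

lemma of_retract (hM' : RightFlat V M') (i : M →ₗ[Vᵐᵒᵖ] M') (r : M' →ₗ[Vᵐᵒᵖ] M)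
    (hri : r ∘ₗ i = LinearMap.id) : RightFlat V M := by
  intro N N' _ _ _ _ f hf x y hxy
  have hleft : Function.LeftInverse (mapLeft N r) (mapLeft N i) := fun z => by
    rw [← LinearMap.comp_apply, ← mapLeft_comp, hri, mapLeft_id, LinearMap.id_apply]
  have hixy := congrArg (mapLeft N' i) hxy
  simp only [← LinearMap.comp_apply, ← map_comp_mapLeft] at hixy
  exact hleft.injective (hM' N N' f hf hixy)

lemma pi (ι : Type) [Fintype ι] : RightFlat V (ι → Vᵐᵒᵖ) := by
  classical
  intro N N' _ _ _ _ f hf z z' h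
  apply piScalarLeft_bijective.injective
  have h' := congrArg (piScalarLeft V ι N') h
  rw [piScalarLeft_map, piScalarLeft_map] at h'
  exact hf.comp_left h'

lemma of_projective [Module.Finite Vᵐᵒᵖ M] [Module.Projective Vᵐᵒᵖ M] : RightFlat V M := by
  obtain ⟨n, p, hp⟩ := Module.Finite.exists_fin' Vᵐᵒᵖ M
  obtain ⟨s, hs⟩ := Module.projective_lifting_property p LinearMap.id hp
  exact (pi (Fin n)).of_retract s p hs

variable {ι : Type} [Fintype ι] [DecidableEq ι] {p : (ι → Vᵐᵒᵖ) →ₗ[Vᵐᵒᵖ] M}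

-- `ker p ∩ F I = (ker p) I` for every left ideal `I`, tested elementwise.
lemma exists_finset_sum_eq_of_mem_ker (hM : RightFlat V M) (hp : Function.Surjective p)
    (I : Submodule V V) {k : ι → Vᵐᵒᵖ} (hk : p k = 0) (hkI : ∀ j, (k j).unop ∈ I) :
    ∃ S : Finset (LinearMap.ker p × I), ∑ t ∈ S, op (t.2 : V) • (t.1 : ι → Vᵐᵒᵖ) = k := by
  obtain ⟨z, hz⟩ :=
    (piScalarLeft_bijective (V := V) (N := I)).2 fun j => (⟨(k j).unop, hkI j⟩ : I)
  have hzV : NCTensor.map V _ I.subtype z = mk V _ V (k ⊗ₜ 1) := by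
    apply piScalarLeft_bijective.1
    rw [piScalarLeft_map, hz, piScalarLeft_mk_tmul]
    ext j
    simp
  have hz0 : mapLeft I p z = 0 := by
    apply hM I V I.subtype I.injective_subtype
    rw [← LinearMap.comp_apply, map_comp_mapLeft, LinearMap.comp_apply, hzV, mapLeft_mk_tmul,
      hk, TensorProduct.zero_tmul, map_zero, map_zero]
  obtain ⟨y, rfl⟩ := ker_mapLeft_le_range_of_surjective hp hz0
  obtain ⟨u, rfl⟩ := mk_surjective y
  obtain ⟨S, rfl⟩ := TensorProduct.exists_finset u
  refine ⟨S, ?_⟩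
  ext j
  have hj := congrArg Subtype.val (congrFun hz j)
  simp only [map_sum, mapLeft_mk_tmul, Submodule.subtype_apply, piScalarLeft_mk_tmul,
    Finset.sum_apply, AddSubmonoidClass.coe_finsetSum, SetLike.val_smul, smul_eq_mul] at hj
  rw [← op_unop (k j), ← hj]
  simp [Finset.op_sum]

lemma exists_sum_smul_eq_of_mem_ker (hM : RightFlat V M) (hp : Function.Surjective p)
    {k : ι → Vᵐᵒᵖ} (hk : p k = 0) :
    ∃ y : ι → ι → Vᵐᵒᵖ, (∀ j, p (y j) = 0) ∧ ∑ j, k j • y j = k := by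
  set I := Submodule.span V (Set.range fun j => (k j).unop)
  obtain ⟨S, hS⟩ :=
    hM.exists_finset_sum_eq_of_mem_ker hp I hk fun j => Submodule.subset_span ⟨j, rfl⟩
  choose D hD using fun c : I => (Submodule.mem_span_range_iff_exists_fun V).mp c.2
  refine ⟨fun j => ∑ t ∈ S, op (D t.2 j) • (t.1 : ι → Vᵐᵒᵖ), fun j => ?_, ?_⟩
  · simp [map_sum]
  · calc ∑ j, k j • ∑ t ∈ S, op (D t.2 j) • (t.1 : ι → Vᵐᵒᵖ)
        = ∑ t ∈ S, op (∑ j, D t.2 j • (k j).unop) • (t.1 : ι → Vᵐᵒᵖ) := by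
          simp_rw [Finset.smul_sum, smul_smul, Finset.op_sum, Finset.sum_smul]
          rw [Finset.sum_comm]
          rfl
      _ = k := by simp_rw [hD]; exact hS

lemma exists_comp_eq_self_apply_eq_zero (hM : RightFlat V M) (hp : Function.Surjective p)
    {k : ι → Vᵐᵒᵖ} (hk : p k = 0) :
    ∃ σ : (ι → Vᵐᵒᵖ) →ₗ[Vᵐᵒᵖ] (ι → Vᵐᵒᵖ), p ∘ₗ σ = p ∧ σ k = 0 := by
  obtain ⟨y, hy, hyk⟩ := hM.exists_sum_smul_eq_of_mem_ker hp hk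
  refine ⟨LinearMap.id - Fintype.linearCombination Vᵐᵒᵖ y, ?_, ?_⟩
  · ext x
    simp [Fintype.linearCombination_apply, hy]
  · simp [Fintype.linearCombination_apply, hyk]

lemma exists_comp_eq_self_forall_apply_eq_zero (hM : RightFlat V M)
    (hp : Function.Surjective p) (s : Finset (ι → Vᵐᵒᵖ)) (hs : ∀ x ∈ s, p x = 0) :
    ∃ σ : (ι → Vᵐᵒᵖ) →ₗ[Vᵐᵒᵖ] (ι → Vᵐᵒᵖ), p ∘ₗ σ = p ∧ ∀ x ∈ s, σ x = 0 := by
  classical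
  induction s using Finset.induction_on with
  | empty => exact ⟨LinearMap.id, rfl, by simp⟩
  | insert a s _ ih =>
    obtain ⟨σ, hσp, hσs⟩ := ih fun x hx => hs x (Finset.mem_insert_of_mem hx)
    have hσa : p (σ a) = 0 := by
      rw [← LinearMap.comp_apply, hσp]
      exact hs a (Finset.mem_insert_self a s)
    obtain ⟨τ, hτp, hτa⟩ := hM.exists_comp_eq_self_apply_eq_zero hp hσa
    refine ⟨τ ∘ₗ σ, by rw [← LinearMap.comp_assoc, hτp, hσp], fun x hx => ?_⟩
    rcases Finset.mem_insert.mp hx with rfl | hx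
    · exact hτa
    · rw [LinearMap.comp_apply, hσs x hx, map_zero]

lemma projective [Module.FinitePresentation Vᵐᵒᵖ M] (hM : RightFlat V M) :
    Module.Projective Vᵐᵒᵖ M := by
  obtain ⟨n, p, hp⟩ := Module.Finite.exists_fin' Vᵐᵒᵖ M
  obtain ⟨s, hs⟩ := Module.FinitePresentation.fg_ker p hp
  obtain ⟨σ, hσp, hσs⟩ := hM.exists_comp_eq_self_forall_apply_eq_zero hp s
    fun x hx => hs.le (Submodule.subset_span hx)
  have hker : LinearMap.ker p ≤ LinearMap.ker σ := hs.ge.trans (Submodule.span_le.mpr hσs)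
  refine Module.Projective.of_split
    ((LinearMap.ker p).liftQ σ hker ∘ₗ (p.quotKerEquivOfSurjective hp).symm) p ?_
  ext m
  obtain ⟨x, rfl⟩ := hp m
  simpa using congr($hσp x)

end RightFlat

/-- A (right) module over any ring is finitely generated and projective
if and only if it is finitely presented and flat. -/
theorem stmt_6 (R : Type) [Ring R] (M : Type) [AddCommGroup M] [Module Rᵐᵒᵖ M] :
    (Module.Finite Rᵐᵒᵖ M ∧ Module.Projective Rᵐᵒᵖ M) ↔
      (Module.FinitePresentation Rᵐᵒᵖ M ∧ RightFlat R M) := by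
  constructor
  · rintro ⟨_, _⟩
    exact ⟨Module.finitePresentation_of_projective Rᵐᵒᵖ M, RightFlat.of_projective⟩
  · rintro ⟨_, hM⟩
    exact ⟨inferInstance, hM.projective⟩
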